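/- Let T > 0, C > 0, k ≥ 0, m > k with m ≥ 2, K > 0 and λ, ε, β > 0. Let w : (0,T)×H → ℝ be bounded on bounded subsets of (0,T)×H and satisfy w(t,x) ≥ −C(1+‖x‖^k) for all (t,x) ∈ (0,T)×H. Then for every R > 0 there exists M > 0 such that whenever the inf-convolution v = w_{λ,ε,β} is Fréchet differentiable at a point (t,x) ∈ (0,T)×B_R, one has |v_t(t,x)| ≤ M and there exists q ∈ H with ‖q‖ ≤ M such that the spatial Fréchet derivative satisfies Dv(t,x) = Bq. -/

import Mathlib

/-! Along any line `s ↦ (t + sτ, x + sh)` the function minimised in `infConv` is a quadratic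
polynomial in `s` with slope `τ (t - s₀)/β + ⟪B (x - y)/ε, h⟫` at `s = 0`, where `(s₀, y)` is the
minimisation variable. So at a point of differentiability `v` is bounded above, up to `δ`, by
quadratics whose slopes are those of `δ`-minimisers, and letting `δ → 0` bounds the derivative by
these slopes. Since `k < m`, the penalty `λ‖y‖^m` beats the growth bound on `w`, which keeps
`δ`-minimisers in a fixed ball; this gives `|v_t| ≤ T/β` and `|Dv(t,x) h| ≤ M ‖B h‖`. A
functional dominated by `‖B h‖` is `⟪B q, ·⟫` for some `‖q‖ ≤ M`: Hahn–Banach on the range of `B`,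
then Riesz. -/

open scoped InnerProductSpace

/-- The inf-convolution
`w_{λ,ε,β}(t,x) = inf_{(s,y)∈(0,T)×H} { w(s,y) + ‖x−y‖₋₁²/(2ε) + (t−s)²/(2β) + λ e^{2mK(T−s)}‖y‖^m }`,
where `‖z‖₋₁² = ⟨Bz,z⟩`. -/
noncomputable def infConv {H : Type*} [NormedAddCommGroup H] [InnerProductSpace ℝ H]
    (B : H →L[ℝ] H) (T m K lam ε β : ℝ) (w : ℝ → H → ℝ) (t : ℝ) (x : H) : ℝ :=
  sInf ((fun p : ℝ × H =>
      w p.1 p.2 + ⟪B (x - p.2), x - p.2⟫_ℝ / (2 * ε) + (t - p.1) ^ 2 / (2 * β)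
        + lam * Real.exp (2 * m * K * (T - p.1)) * ‖p.2‖ ^ m) ''
    (Set.Ioo 0 T ×ˢ (Set.univ : Set H)))

open Filter Topology Set

theorem tendsto_mul_rpow_sub_mul_one_add_rpow_atTop {lam C k m : ℝ} (hlam : 0 < lam)
    (hm : 0 < m) (hkm : k < m) :
    Tendsto (fun r : ℝ => lam * r ^ m - C * (1 + r ^ k)) atTop atTop := by
  have hlim : Tendsto (fun r : ℝ => lam - C * r ^ (k - m)) atTop (𝓝 lam) := by
    have := (tendsto_rpow_neg_atTop (sub_pos.2 hkm)).const_mul C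
    simpa using tendsto_const_nhds.sub this
  refine (tendsto_atTop_add_const_right _ (-C)
    ((tendsto_rpow_atTop hm).atTop_mul_pos hlam hlim)).congr' ?_
  filter_upwards [eventually_gt_atTop 0] with r hr
  have : r ^ m * r ^ (k - m) = r ^ k := by rw [← Real.rpow_add hr]; ring_nf
  linear_combination (-C) * this

theorem exists_forall_le_mul_rpow_sub_mul_one_add_rpow {lam C k m : ℝ} (hlam : 0 < lam)
    (hk : 0 ≤ k) (hkm : k < m) :
    ∃ L, ∀ r, 0 ≤ r → L ≤ lam * r ^ m - C * (1 + r ^ k) := by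
  obtain ⟨R, hR⟩ := eventually_atTop.1 <|
    (tendsto_mul_rpow_sub_mul_one_add_rpow_atTop (C := C) hlam (hk.trans_lt hkm)
      hkm).eventually_ge_atTop 0
  refine ⟨-(|C| * (1 + max R 0 ^ k)), fun r hr => ?_⟩
  have hR0 : 0 ≤ max R 0 ^ k := Real.rpow_nonneg (le_max_right _ _) _
  rcases le_total R r with hRr | hrR
  · nlinarith [hR r hRr, abs_nonneg C]
  · have hrk : r ^ k ≤ max R 0 ^ k := Real.rpow_le_rpow hr (le_max_of_le_left hrR) hk
    nlinarith [mul_nonneg hlam.le (Real.rpow_nonneg hr m),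
      mul_le_mul_of_nonneg_right (le_abs_self C) (by positivity : (0 : ℝ) ≤ 1 + r ^ k),
      mul_le_mul_of_nonneg_left hrk (abs_nonneg C)]

theorem LinearMap.exists_strongDual_comp_eq_of_abs_le {E F : Type*} [AddCommGroup E] [Module ℝ E]
    [NormedAddCommGroup F] [NormedSpace ℝ F] (B : E →ₗ[ℝ] F) (φ : E →ₗ[ℝ] ℝ) {M : ℝ}
    (hM : 0 ≤ M) (hφ : ∀ x, |φ x| ≤ M * ‖B x‖) :
    ∃ g : StrongDual ℝ F, ‖g‖ ≤ M ∧ ∀ x, g (B x) = φ x := by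
  have hker : LinearMap.ker B ≤ LinearMap.ker φ := fun x hx => by
    have := hφ x
    rw [LinearMap.mem_ker] at hx ⊢
    rwa [hx, norm_zero, mul_zero, abs_nonpos_iff] at this
  let ψ : LinearMap.range B →ₗ[ℝ] ℝ :=
    (LinearMap.ker B).liftQ φ hker ∘ₗ B.quotKerEquivRange.symm.toLinearMap
  have hψ : ∀ x, ψ ⟨B x, LinearMap.mem_range_self B x⟩ = φ x := fun x => by
    simp [ψ, LinearMap.quotKerEquivRange_symm_apply_image]
  let ψc : StrongDual ℝ (LinearMap.range B) :=
    ψ.mkContinuous M (by rintro ⟨_, x, rfl⟩; simpa [hψ] using hφ x)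
  obtain ⟨g, hg, hgψ⟩ := exists_extension_norm_eq _ ψc
  exact ⟨g, hgψ ▸ ψ.mkContinuous_norm_le hM _, fun x => (hg ⟨B x, _⟩).trans (hψ x)⟩

theorem LinearMap.exists_inner_comp_eq_of_abs_le {E H : Type*} [AddCommGroup E] [Module ℝ E]
    [NormedAddCommGroup H] [InnerProductSpace ℝ H] [CompleteSpace H] (B : E →ₗ[ℝ] H)
    (φ : E →ₗ[ℝ] ℝ) {M : ℝ} (hM : 0 ≤ M) (hφ : ∀ x, |φ x| ≤ M * ‖B x‖) :
    ∃ q : H, ‖q‖ ≤ M ∧ ∀ x, φ x = ⟪q, B x⟫_ℝ := by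
  obtain ⟨g, hg, hgφ⟩ := B.exists_strongDual_comp_eq_of_abs_le φ hM hφ
  refine ⟨(InnerProductSpace.toDual ℝ H).symm g, by rwa [LinearIsometryEquiv.norm_map], fun x => ?_⟩
  rw [InnerProductSpace.toDual_symm_apply, hgφ]

theorem le_of_hasLineDerivAt_of_forall_le_quadratic {E : Type*} [AddCommGroup E] [Module ℝ E]
    {f : E → ℝ} {z v : E} {d M c : ℝ} (hf : HasLineDerivAt ℝ f d z v)
    (h : ∀ δ > 0, ∃ a ≤ M, ∀ s : ℝ, f (z + s • v) ≤ f z + δ + a * s + c * s ^ 2) :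
    d ≤ M := by
  refine le_of_forall_pos_le_add fun θ hθ => ?_
  have hθ3 : 0 < θ / 3 := by positivity
  have hc : ∀ᶠ s in 𝓝 (0 : ℝ), c * s < θ / 3 :=
    ((continuous_const_mul c).tendsto' 0 0 (mul_zero c)).eventually (eventually_lt_nhds hθ3)
  have ho := (hasDerivAt_iff_isLittleO_nhds_zero.1 hf).def hθ3
  have hpos : ∀ᶠ s in 𝓝[>] (0 : ℝ), 0 < s := self_mem_nhdsWithin
  obtain ⟨s, hs, hcs, hos⟩ := (hpos.and (nhdsWithin_le_nhds (hc.and ho))).exists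
  obtain ⟨a, haM, ha⟩ := h (s * (θ / 3)) (by positivity)
  simp only [zero_add, zero_smul, add_zero, smul_eq_mul, Real.norm_eq_abs, abs_of_pos hs] at hos
  have hsd : s * d ≤ s * (M + θ) := by
    nlinarith [(abs_le.1 hos).1, ha s]
  exact le_of_mul_le_mul_left hsd hs

theorem abs_apply_le_of_hasFDerivAt_of_forall_le_quadratic {E : Type*} [NormedAddCommGroup E]
    [NormedSpace ℝ E] {f : E → ℝ} {D : E →L[ℝ] ℝ} {z v : E} {M c : ℝ} (hf : HasFDerivAt f D z)
    (h : ∀ δ > 0, ∃ a, |a| ≤ M ∧ ∀ s : ℝ, f (z + s • v) ≤ f z + δ + a * s + c * s ^ 2) :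
    |D v| ≤ M := by
  refine abs_le.2 ⟨?_, le_of_hasLineDerivAt_of_forall_le_quadratic (c := c)
    (hf.hasLineDerivAt v) fun δ hδ => ?_⟩
  · suffices D (-v) ≤ M by rw [map_neg] at this; linarith
    refine le_of_hasLineDerivAt_of_forall_le_quadratic (c := c) (hf.hasLineDerivAt (-v))
      fun δ hδ => ?_
    obtain ⟨a, ha, hfa⟩ := h δ hδ
    refine ⟨-a, (neg_le_abs a).trans ha, fun s => ?_⟩
    simpa [smul_neg, ← neg_smul] using hfa (-s)
  · obtain ⟨a, ha, hfa⟩ := h δ hδ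
    exact ⟨a, (le_abs_self a).trans ha, hfa⟩

section InfConvolution

variable {H : Type*} [NormedAddCommGroup H] [InnerProductSpace ℝ H]
  (B : H →L[ℝ] H) (T m K lam ε β : ℝ) (w : ℝ → H → ℝ)

noncomputable def infConvObjective (t : ℝ) (x : H) (p : ℝ × H) : ℝ :=
  w p.1 p.2 + ⟪B (x - p.2), x - p.2⟫_ℝ / (2 * ε) + (t - p.1) ^ 2 / (2 * β)
    + lam * Real.exp (2 * m * K * (T - p.1)) * ‖p.2‖ ^ m

theorem infConvObjective_self (t : ℝ) (x : H) :
    infConvObjective B T m K lam ε β w t x (t, x) =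
      w t x + lam * Real.exp (2 * m * K * (T - t)) * ‖x‖ ^ m := by
  simp [infConvObjective]

theorem infConvObjective_add_smul (hB : (B : H →ₗ[ℝ] H).IsSymmetric) (t : ℝ) (x : H)
    (p : ℝ × H) (τ s : ℝ) (h : H) :
    infConvObjective B T m K lam ε β w (t + s * τ) (x + s • h) p =
      infConvObjective B T m K lam ε β w t x p
        + (τ * ((t - p.1) / β) + ⟪B (ε⁻¹ • (x - p.2)), h⟫_ℝ) * s
        + (τ ^ 2 / (2 * β) + ⟪B h, h⟫_ℝ / (2 * ε)) * s ^ 2 := by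
  have hquad : ⟪B (x + s • h - p.2), x + s • h - p.2⟫_ℝ =
      ⟪B (x - p.2), x - p.2⟫_ℝ + 2 * s * ⟪B (x - p.2), h⟫_ℝ + s ^ 2 * ⟪B h, h⟫_ℝ := by
    have hsymm : ⟪B h, x - p.2⟫_ℝ = ⟪B (x - p.2), h⟫_ℝ := by
      rw [real_inner_comm]; exact (hB _ _).symm
    rw [show x + s • h - p.2 = (x - p.2) + s • h by abel, map_add, map_smul, inner_add_left,
      inner_add_right, inner_add_right, real_inner_smul_left, real_inner_smul_right,
      real_inner_smul_right, real_inner_smul_left, hsymm]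
    ring
  simp only [infConvObjective, hquad, map_smul, real_inner_smul_left]
  ring

theorem mul_rpow_sub_le_infConvObjective (hB : ∀ y, 0 ≤ ⟪B y, y⟫_ℝ) (hm : 0 ≤ m) (hK : 0 ≤ K)
    (hlam : 0 ≤ lam) (hε : 0 ≤ ε) (hβ : 0 ≤ β) {C k : ℝ}
    (hw : ∀ s ∈ Ioo 0 T, ∀ y, -C * (1 + ‖y‖ ^ k) ≤ w s y) (t : ℝ) (x : H) (p : ℝ × H)
    (hp : p ∈ Ioo 0 T ×ˢ (univ : Set H)) :
    lam * ‖p.2‖ ^ m - C * (1 + ‖p.2‖ ^ k) ≤ infConvObjective B T m K lam ε β w t x p := by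
  have hexp : 1 ≤ Real.exp (2 * m * K * (T - p.1)) :=
    Real.one_le_exp (by have := hp.1.2; have := mul_nonneg hm hK; nlinarith)
  have hpen : lam * ‖p.2‖ ^ m ≤ lam * Real.exp (2 * m * K * (T - p.1)) * ‖p.2‖ ^ m := by
    have := Real.rpow_nonneg (norm_nonneg p.2) m
    nlinarith [mul_nonneg hlam this]
  have hwp := hw p.1 hp.1 p.2
  have hspace := div_nonneg (hB (x - p.2)) (by positivity : (0 : ℝ) ≤ 2 * ε)
  have htime : 0 ≤ (t - p.1) ^ 2 / (2 * β) := by positivity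
  simp only [infConvObjective]
  linarith

variable {B T m K lam ε β w}

theorem infConv_le_infConvObjective {t : ℝ} {x : H}
    (hbdd : BddBelow (infConvObjective B T m K lam ε β w t x '' Ioo 0 T ×ˢ univ)) {p : ℝ × H}
    (hp : p ∈ Ioo 0 T ×ˢ (univ : Set H)) :
    infConv B T m K lam ε β w t x ≤ infConvObjective B T m K lam ε β w t x p :=
  csInf_le hbdd (mem_image_of_mem _ hp)

theorem exists_infConvObjective_le_add_and_norm_le {t : ℝ} {x : H}
    (hbdd : BddBelow (infConvObjective B T m K lam ε β w t x '' Ioo 0 T ×ˢ univ))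
    (ht : t ∈ Ioo 0 T) {ψ : ℝ → ℝ}
    (hψ : ∀ p ∈ Ioo 0 T ×ˢ (univ : Set H), ψ ‖p.2‖ ≤ infConvObjective B T m K lam ε β w t x p)
    {A R₁ : ℝ} (hA : infConvObjective B T m K lam ε β w t x (t, x) + 1 ≤ A)
    (hR₁ : ∀ r ≥ R₁, A < ψ r) {δ : ℝ} (hδ : 0 < δ) :
    ∃ p ∈ Ioo 0 T ×ˢ (univ : Set H),
      infConvObjective B T m K lam ε β w t x p ≤ infConv B T m K lam ε β w t x + δ ∧
        ‖p.2‖ ≤ R₁ := by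
  have hS : (t, x) ∈ Ioo 0 T ×ˢ (univ : Set H) := ⟨ht, mem_univ x⟩
  obtain ⟨_, ⟨p, hp, rfl⟩, hpδ⟩ := exists_lt_of_csInf_lt
    ((nonempty_of_mem hS).image (infConvObjective B T m K lam ε β w t x))
    (lt_add_of_pos_right (infConv B T m K lam ε β w t x) (lt_min hδ one_pos))
  refine ⟨p, hp, hpδ.le.trans (by gcongr; exact min_le_left _ _), not_lt.1 fun hpR => ?_⟩
  have := infConv_le_infConvObjective hbdd hS
  linarith [hR₁ _ hpR.le, hψ p hp, min_le_right δ 1]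

theorem infConv_add_smul_le (hB : (B : H →ₗ[ℝ] H).IsSymmetric)
    (hbdd : ∀ t x, BddBelow (infConvObjective B T m K lam ε β w t x '' Ioo 0 T ×ˢ univ))
    {t : ℝ} {x : H} {p : ℝ × H} {δ : ℝ} (hp : p ∈ Ioo 0 T ×ˢ (univ : Set H))
    (hpδ : infConvObjective B T m K lam ε β w t x p ≤ infConv B T m K lam ε β w t x + δ)
    (τ s : ℝ) (h : H) :
    infConv B T m K lam ε β w (t + s * τ) (x + s • h) ≤ infConv B T m K lam ε β w t x + δ
      + (τ * ((t - p.1) / β) + ⟪B (ε⁻¹ • (x - p.2)), h⟫_ℝ) * s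
      + (τ ^ 2 / (2 * β) + ⟪B h, h⟫_ℝ / (2 * ε)) * s ^ 2 := by
  have := infConv_le_infConvObjective (hbdd (t + s * τ) (x + s • h)) hp
  rw [infConvObjective_add_smul B T m K lam ε β w hB] at this
  linarith

theorem abs_fderiv_infConv_apply_le (hB : (B : H →ₗ[ℝ] H).IsSymmetric)
    (hbdd : ∀ t x, BddBelow (infConvObjective B T m K lam ε β w t x '' Ioo 0 T ×ˢ univ))
    (hβ : 0 < β) (hε : 0 < ε) {t : ℝ} {x : H} {R₁ : ℝ} {D : ℝ × H →L[ℝ] ℝ} (ht : t ∈ Ioo 0 T)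
    (hnear : ∀ δ > 0, ∃ p ∈ Ioo 0 T ×ˢ (univ : Set H),
      infConvObjective B T m K lam ε β w t x p ≤ infConv B T m K lam ε β w t x + δ ∧
        ‖p.2‖ ≤ R₁)
    (hD : HasFDerivAt (fun p : ℝ × H => infConv B T m K lam ε β w p.1 p.2) D (t, x)) :
    |D (1, 0)| ≤ T / β ∧ ∀ h, |D (0, h)| ≤ (‖x‖ + R₁) / ε * ‖B h‖ := by
  constructor
  · refine abs_apply_le_of_hasFDerivAt_of_forall_le_quadratic (c := 1 / (2 * β)) hD
      fun δ hδ => ?_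
    obtain ⟨p, hp, hpδ, -⟩ := hnear δ hδ
    refine ⟨(t - p.1) / β, ?_, fun s => by simpa using infConv_add_smul_le hB hbdd hp hpδ 1 s 0⟩
    rw [abs_div, abs_of_pos hβ]
    gcongr
    exact abs_le.2 ⟨by linarith [ht.1, hp.1.2], by linarith [ht.2, hp.1.1]⟩
  · intro h
    refine abs_apply_le_of_hasFDerivAt_of_forall_le_quadratic
      (c := ⟪B h, h⟫_ℝ / (2 * ε)) hD fun δ hδ => ?_
    obtain ⟨p, hp, hpδ, hpR⟩ := hnear δ hδ
    refine ⟨⟪B (ε⁻¹ • (x - p.2)), h⟫_ℝ, ?_,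
      fun s => by simpa using infConv_add_smul_le hB hbdd hp hpδ 0 s h⟩
    calc |⟪B (ε⁻¹ • (x - p.2)), h⟫_ℝ| = |⟪ε⁻¹ • (x - p.2), B h⟫_ℝ| :=
          congrArg _ (hB _ _)
      _ ≤ ‖ε⁻¹ • (x - p.2)‖ * ‖B h‖ := abs_real_inner_le_norm _ _
      _ ≤ (‖x‖ + R₁) / ε * ‖B h‖ := by
        rw [norm_smul, Real.norm_of_nonneg (inv_nonneg.2 hε.le), inv_mul_eq_div]
        gcongr
        exact (norm_sub_le _ _).trans (by linarith)

end InfConvolution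

theorem infConv_derivative_structure_general
    {H : Type*} [NormedAddCommGroup H] [InnerProductSpace ℝ H] [CompleteSpace H]
    (B : H →L[ℝ] H) (hBsa : IsSelfAdjoint B) (hBpos : ∀ x : H, 0 ≤ ⟪B x, x⟫_ℝ)
    (T C k m K lam ε β : ℝ)
    (hk : 0 ≤ k) (hkm : k < m)
    (hK : 0 < K) (hlam : 0 < lam) (hε : 0 < ε) (hβ : 0 < β)
    (w : ℝ → H → ℝ)
    (hbdd : ∀ R > (0 : ℝ), ∃ M : ℝ, ∀ t ∈ Set.Ioo (0 : ℝ) T, ∀ x : H, ‖x‖ ≤ R → |w t x| ≤ M)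
    (hgrowth : ∀ t ∈ Set.Ioo (0 : ℝ) T, ∀ x : H, -C * (1 + ‖x‖ ^ k) ≤ w t x) :
    ∀ R > (0 : ℝ), ∃ M > (0 : ℝ), ∀ t ∈ Set.Ioo (0 : ℝ) T, ∀ x : H, ‖x‖ < R →
      ∀ D : ℝ × H →L[ℝ] ℝ,
        HasFDerivAt (fun p : ℝ × H => infConv B T m K lam ε β w p.1 p.2) D (t, x) →
          |D ((1 : ℝ), (0 : H))| ≤ M ∧
          ∃ q : H, ‖q‖ ≤ M ∧ ∀ h : H, D ((0 : ℝ), h) = ⟪B q, h⟫_ℝ := by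
  intro R hR
  obtain ⟨Mw, hMw⟩ := hbdd R hR
  have hm : 0 ≤ m := hk.trans hkm.le
  have hobj := mul_rpow_sub_le_infConvObjective B T m K lam ε β w hBpos hm hK.le hlam.le
    hε.le hβ.le hgrowth
  obtain ⟨L, hL⟩ := exists_forall_le_mul_rpow_sub_mul_one_add_rpow (C := C) hlam hk hkm
  have hbelow (t : ℝ) (x : H) :
      BddBelow (infConvObjective B T m K lam ε β w t x '' Ioo 0 T ×ˢ univ) :=
    ⟨L, forall_mem_image.2 fun p hp => (hL _ (norm_nonneg _)).trans (hobj t x p hp)⟩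
  obtain ⟨R₁, hR₁⟩ := eventually_atTop.1 <| (tendsto_mul_rpow_sub_mul_one_add_rpow_atTop
    (C := C) hlam (hk.trans_lt hkm) hkm).eventually_gt_atTop
      (Mw + lam * Real.exp (2 * m * K * T) * R ^ m + 1)
  set M := max (max (T / β) ((R + R₁) / ε)) 1
  refine ⟨M, by positivity, fun t ht x hx D hD => ?_⟩
  have hA : infConvObjective B T m K lam ε β w t x (t, x) + 1 ≤
      Mw + lam * Real.exp (2 * m * K * T) * R ^ m + 1 := by
    rw [infConvObjective_self]
    gcongr
    · exact (abs_le.1 (hMw t ht x hx.le)).2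
    · nlinarith [ht.1, mul_nonneg hm hK.le]
  obtain ⟨hDt, hDx⟩ := abs_fderiv_infConv_apply_le hBsa.isSymmetric hbelow hβ hε ht
    (fun δ hδ => exists_infConvObjective_le_add_and_norm_le (hbelow t x) ht
      (hobj t x) hA hR₁ hδ) hD
  have hxM : (‖x‖ + R₁) / ε ≤ M :=
    le_max_of_le_left (le_max_of_le_right (by gcongr))
  obtain ⟨q, hq, hDq⟩ := LinearMap.exists_inner_comp_eq_of_abs_le (B : H →ₗ[ℝ] H)
    ((D : ℝ × H →ₗ[ℝ] ℝ) ∘ₗ LinearMap.inr ℝ ℝ H) (by positivity : 0 ≤ M)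
    fun h => (hDx h).trans (mul_le_mul_of_nonneg_right hxM (norm_nonneg _))
  exact ⟨hDt.trans (le_max_of_le_left (le_max_left _ _)), q, hq,
    fun h => (hDq h).trans (hBsa.isSymmetric q h).symm⟩

/-- Lemma 4.2(iii) (inf-convolution case): for every `R > 0` there is `M > 0` such that at
every point `(t,x) ∈ (0,T) × B_R` of Fréchet differentiability of `v = w_{λ,ε,β}` one has
`|v_t(t,x)| ≤ M` and `Dv(t,x) = Bq` for some `q` with `‖q‖ ≤ M`. -/
theorem infConv_derivative_structure
    {H : Type*} [NormedAddCommGroup H] [InnerProductSpace ℝ H] [CompleteSpace H]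
    [TopologicalSpace.SeparableSpace H]
    (B : H →L[ℝ] H) (hBsa : IsSelfAdjoint B) (hBpos : ∀ x : H, 0 ≤ ⟪B x, x⟫_ℝ)
    (T C k m K lam ε β : ℝ)
    (hT : 0 < T) (hC : 0 < C) (hk : 0 ≤ k) (hkm : k < m) (hm : 2 ≤ m)
    (hK : 0 < K) (hlam : 0 < lam) (hε : 0 < ε) (hβ : 0 < β)
    (w : ℝ → H → ℝ)
    (hbdd : ∀ R > (0 : ℝ), ∃ M : ℝ, ∀ t ∈ Set.Ioo (0 : ℝ) T, ∀ x : H, ‖x‖ ≤ R → |w t x| ≤ M)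
    (hgrowth : ∀ t ∈ Set.Ioo (0 : ℝ) T, ∀ x : H, -C * (1 + ‖x‖ ^ k) ≤ w t x) :
    ∀ R > (0 : ℝ), ∃ M > (0 : ℝ), ∀ t ∈ Set.Ioo (0 : ℝ) T, ∀ x : H, ‖x‖ < R →
      ∀ D : ℝ × H →L[ℝ] ℝ,
        HasFDerivAt (fun p : ℝ × H => infConv B T m K lam ε β w p.1 p.2) D (t, x) →
          |D ((1 : ℝ), (0 : H))| ≤ M ∧
          ∃ q : H, ‖q‖ ≤ M ∧ ∀ h : H, D ((0 : ℝ), h) = ⟪B q, h⟫_ℝ :=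
  infConv_derivative_structure_general B hBsa hBpos T C k m K lam ε β hk hkm hK hlam hε hβ w hbdd
    hgrowth
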